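/- arXiv:1409.2324 — 3 statements merged into one kernel-verified Lean document; each statement's English description precedes it below -/
import Mathlib

section
/- With the block setup where U = [[1, NR₂₁ᵀ],[𝟙_{N−1}, NR₂₂ᵀ]] is invertible and R₂₁ = −R₂₂𝟙_{N−1}, the block R₂₂ is invertible (full rank). -/
open Matrix

theorem R22_full_rank (n : ℕ)
    (R21 : Matrix (Fin n) (Fin 1) ℝ) (R22 : Matrix (Fin n) (Fin n) ℝ)
    (U : Matrix (Fin 1 ⊕ Fin n) (Fin 1 ⊕ Fin n) ℝ)
    (hU : U = Matrix.fromBlocks 1 (((n : ℝ) + 1) • R21ᵀ)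
      (Matrix.of fun _ _ => 1) (((n : ℝ) + 1) • R22ᵀ))
    (hUunit : IsUnit U.det)
    (hR21 : R21 = -(R22 * (Matrix.of fun _ _ => 1 : Matrix (Fin n) (Fin 1) ℝ))) :
    IsUnit R22.det := by
  subst hU hR21
  have : Invertible (1 : Matrix (Fin 1) (Fin 1) ℝ) := invertibleOne
  rw [Matrix.det_fromBlocks₁₁] at hUunit
  have hkey : (((n : ℝ) + 1) • R22ᵀ -
      (Matrix.of fun _ _ => 1 : Matrix (Fin n) (Fin 1) ℝ) * ⅟(1 : Matrix (Fin 1) (Fin 1) ℝ) *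
        (((n : ℝ) + 1) • (-(R22 * (Matrix.of fun _ _ => 1 : Matrix (Fin n) (Fin 1) ℝ)))ᵀ))
      = ((n : ℝ) + 1) • (((1 : Matrix (Fin n) (Fin n) ℝ) +
          (Matrix.of fun _ _ => 1 : Matrix (Fin n) (Fin n) ℝ)) * R22ᵀ) := by
    rw [invOf_one, Matrix.mul_one, Matrix.transpose_neg, Matrix.transpose_mul,
      Matrix.mul_smul, Matrix.mul_neg, smul_neg, sub_neg_eq_add, add_mul, one_mul, smul_add]
    congr 1
    rw [← Matrix.mul_assoc]
    congr 1
    ext i j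
    simp [Matrix.mul_apply]
  rw [hkey, Matrix.det_smul, Matrix.det_mul, Matrix.det_transpose] at hUunit
  exact isUnit_of_mul_isUnit_right (isUnit_of_mul_isUnit_right (isUnit_of_mul_isUnit_right hUunit))
end

section
/- Consider the closed-loop PID consensus network ẋ = L̃⁻¹(P − αL)x + z + L̃⁻¹Δ, ż = −βL̃⁻¹Lx with β > 0, where L is the Laplacian of a connected undirected graph, L̃ = I + γL, P = diag(ρ₁,…,ρ_N) with Σρ_k ≠ 0, and Δ = (δ₁,…,δ_N)ᵀ. Subject to the constraint 𝟙ᵀz = 0 (which is preserved by the dynamics from zero initial integral state), the system has a unique equilibrium given by x* = x_∞𝟙 with x_∞ = −(Σ_k δ_k)/(Σ_k ρ_k) and z* = −L̃⁻¹(Px* + Δ). -/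
open Matrix

/-! Since `L̃ = I + γL` is positive definite, hence invertible, the second equation says
`L x = 0`, so `x = c𝟙`; then `L x = 0` also kills the `αL` term and the first equation solves
for `z`. As `L` is symmetric with `L𝟙 = 0`, we have `𝟙ᵀL̃ = 𝟙ᵀ`, so `L̃⁻¹` preserves coordinate
sums and `𝟙ᵀz = 0` becomes `c Σρ + Σδ = 0`, which pins down `c`. -/

namespace Matrix

theorem PosSemidef.posDef_one_add_smul {n : Type*} [DecidableEq n] {L : Matrix n n ℝ}
    (hL : L.PosSemidef) {γ : ℝ} (hγ : 0 ≤ γ) : (1 + γ • L).PosDef :=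
  PosDef.one.add_posSemidef (hL.smul hγ)

variable {n R : Type*} [Fintype n] [CommRing R]

theorem sum_mulVec_of_one_vecMul {A : Matrix n n R} (h : 1 ᵥ* A = 1) (w : n → R) :
    ∑ i, (A *ᵥ w) i = ∑ i, w i := by
  simpa [h, dotProduct] using dotProduct_mulVec 1 A w

variable [DecidableEq n]

theorem nonsing_inv_mul_mulVec_eq_zero_iff {A B : Matrix n n R} (hA : IsUnit A) {x : n → R} :
    (A⁻¹ * B) *ᵥ x = 0 ↔ B *ᵥ x = 0 := by
  rw [← mulVec_mulVec,
    (mulVec_injective_of_isUnit (isUnit_nonsing_inv_iff.2 hA)).eq_iff' (mulVec_zero _)]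

theorem vecMul_nonsing_inv_of_vecMul_eq {A : Matrix n n R} (hA : IsUnit A) {v : n → R}
    (h : v ᵥ* A = v) : v ᵥ* A⁻¹ = v := by
  conv_lhs => rw [← h]
  rw [vecMul_vecMul, mul_nonsing_inv A ((isUnit_iff_isUnit_det A).mp hA), vecMul_one]

theorem sum_nonsing_inv_one_add_smul_mulVec {L : Matrix n n R} (hL : 1 ᵥ* L = 0) {γ : R}
    (hunit : IsUnit (1 + γ • L)) (w : n → R) :
    ∑ i, ((1 + γ • L)⁻¹ *ᵥ w) i = ∑ i, w i := by
  refine sum_mulVec_of_one_vecMul (vecMul_nonsing_inv_of_vecMul_eq hunit ?_) w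
  rw [vecMul_add, vecMul_one, vecMul_smul, hL, smul_zero, add_zero]

end Matrix

theorem unique_equilibrium_of_PID_network_general (N : ℕ)
    (L : Matrix (Fin N) (Fin N) ℝ) (hL : L.PosSemidef)
    (hker : ∀ v : Fin N → ℝ, L.mulVec v = 0 ↔ ∃ c : ℝ, v = fun _ => c)
    (γ α β : ℝ) (hγ : 0 ≤ γ) (hβ : 0 < β)
    (ρ δ : Fin N → ℝ) (hρ : (∑ k, ρ k) ≠ 0) :
    ∀ x z : Fin N → ℝ,
      (((1 + γ • L)⁻¹).mulVec ((Matrix.diagonal ρ - α • L).mulVec x) + z +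
            ((1 + γ • L)⁻¹).mulVec δ = 0 ∧
          (β • (((1 + γ • L)⁻¹) * L)).mulVec x = 0 ∧
          (∑ i, z i) = 0) ↔
        (x = (fun _ => -(∑ k, δ k) / (∑ k, ρ k)) ∧
          z = -(((1 + γ • L)⁻¹).mulVec
            ((Matrix.diagonal ρ).mulVec (fun _ => -(∑ k, δ k) / (∑ k, ρ k)) + δ))) := by
  intro x z
  have hunit : IsUnit (1 + γ • L) := (hL.posDef_one_add_smul hγ).isUnit
  have hconst (c : ℝ) : L *ᵥ (fun _ => c) = 0 := (hker _).2 ⟨c, rfl⟩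
  have hsum := sum_nonsing_inv_one_add_smul_mulVec (by
    rw [← hL.isHermitian.eq, vecMul_conjTranspose, star_one, Pi.one_def, hconst, star_zero]) hunit
  have hfirst (c : ℝ) (z : Fin N → ℝ) :
      (1 + γ • L)⁻¹ *ᵥ ((diagonal ρ - α • L) *ᵥ fun _ => c) + z + (1 + γ • L)⁻¹ *ᵥ δ = 0 ↔
        z = -((1 + γ • L)⁻¹ *ᵥ (diagonal ρ *ᵥ (fun _ => c) + δ)) := by
    rw [sub_mulVec, smul_mulVec, hconst, smul_zero, sub_zero, mulVec_add, add_right_comm,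
      add_comm, add_eq_zero_iff_eq_neg]
  have hsumz (c : ℝ) : ∑ i, (-((1 + γ • L)⁻¹ *ᵥ (diagonal ρ *ᵥ (fun _ => c) + δ))) i =
      -(c * ∑ k, ρ k + ∑ k, δ k) := by
    simp only [Pi.neg_apply, Finset.sum_neg_distrib, hsum, Pi.add_apply, mulVec_diagonal,
      Finset.sum_add_distrib]
    rw [← Finset.sum_mul, mul_comm]
  rw [smul_mulVec, smul_eq_zero, or_iff_right hβ.ne', nonsing_inv_mul_mulVec_eq_zero_iff hunit,
    hker]
  constructor
  · rintro ⟨h1, ⟨c, rfl⟩, h3⟩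
    rw [hfirst] at h1
    subst h1
    rw [hsumz, neg_eq_zero] at h3
    obtain rfl : c = -(∑ k, δ k) / (∑ k, ρ k) := (eq_div_iff hρ).2 (by linarith)
    exact ⟨rfl, rfl⟩
  · rintro ⟨rfl, rfl⟩
    refine ⟨(hfirst _ _).2 rfl, ⟨_, rfl⟩, ?_⟩
    rw [hsumz, div_mul_cancel₀ _ hρ]
    ring

theorem unique_equilibrium_of_PID_network (N : ℕ)
    (L : Matrix (Fin N) (Fin N) ℝ) (hL : L.PosSemidef)
    (hker : ∀ v : Fin N → ℝ, L.mulVec v = 0 ↔ ∃ c : ℝ, v = fun _ => c)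
    (γ α β : ℝ) (hγ : 0 ≤ γ) (hα : 0 < α) (hβ : 0 < β)
    (ρ δ : Fin N → ℝ) (hρ : (∑ k, ρ k) ≠ 0) :
    ∀ x z : Fin N → ℝ,
      (((1 + γ • L)⁻¹).mulVec ((Matrix.diagonal ρ - α • L).mulVec x) + z +
            ((1 + γ • L)⁻¹).mulVec δ = 0 ∧
          (β • (((1 + γ • L)⁻¹) * L)).mulVec x = 0 ∧
          (∑ i, z i) = 0) ↔
        (x = (fun _ => -(∑ k, δ k) / (∑ k, ρ k)) ∧
          z = -(((1 + γ • L)⁻¹).mulVec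
            ((Matrix.diagonal ρ).mulVec (fun _ => -(∑ k, δ k) / (∑ k, ρ k)) + δ))) :=
  unique_equilibrium_of_PID_network_general N L hL hker γ α β hγ hβ ρ δ hρ
end

section
/- For positive diagonal matrices Γ̂ = diag(λ_k/(γλ_k+1)) and Σ̂⁻¹ = diag(1/(γλ_k+1)) for k = 2,…,N with λ_k > 0, γ ≥ 0, and scalars ρ* > 0, α > 0, β > 0, the block matrix à = [[−(ρ*Σ̂⁻¹ + αΓ̂), I],[−βΓ̂, 0]] is Hurwitz: every eigenvalue η of à satisfies Re(η) < 0. Moreover, the eigenvalues of à are exactly the roots of η² + η(αλ_k + ρ*)/(γλ_k + 1) + βλ_k/(γλ_k + 1) = 0 for k = 2,…,N. -/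
open Matrix

/-- Roots of a monic quadratic with positive real coefficients have negative real part. -/
lemma quad_root_re_neg (d e : ℝ) (hd : 0 < d) (he : 0 < e) (η : ℂ)
    (h : η ^ 2 + η * (d : ℂ) + (e : ℂ) = 0) : η.re < 0 := by
  by_contra hre
  push_neg at hre
  have h1 := congrArg Complex.re h
  have h2 := congrArg Complex.im h
  simp [pow_two, Complex.add_re, Complex.add_im, Complex.mul_re, Complex.mul_im] at h1 h2
  have h2' : η.im * (2 * η.re + d) = 0 := by ring_nf; ring_nf at h2; linarith
  rcases mul_eq_zero.mp h2' with h0 | h0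
  · rw [h0] at h1
    nlinarith
  · linarith

theorem transverse_matrix_hurwitz (n : ℕ) (lam : Fin n → ℝ) (hlam : ∀ k, 0 < lam k)
    (γ ρ α β : ℝ) (hγ : 0 ≤ γ) (hρ : 0 < ρ) (hα : 0 < α) (hβ : 0 < β) :
    let Γ : Matrix (Fin n) (Fin n) ℝ := Matrix.diagonal fun k => lam k / (γ * lam k + 1)
    let S : Matrix (Fin n) (Fin n) ℝ := Matrix.diagonal fun k => 1 / (γ * lam k + 1)
    let A : Matrix (Fin n ⊕ Fin n) (Fin n ⊕ Fin n) ℝ :=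
      Matrix.fromBlocks (-(ρ • S + α • Γ)) 1 (-(β • Γ)) 0
    (∀ η ∈ spectrum ℂ (A.map (Complex.ofReal)), η.re < 0) ∧
      spectrum ℂ (A.map (Complex.ofReal)) =
        {η : ℂ | ∃ k : Fin n,
          η ^ 2 + η * ((α * lam k + ρ) / (γ * lam k + 1)) +
            (β * lam k / (γ * lam k + 1)) = 0} := by
  intro Γ S A
  set d : Fin n → ℝ := fun k => (α * lam k + ρ) / (γ * lam k + 1) with hd
  set e : Fin n → ℝ := fun k => β * lam k / (γ * lam k + 1) with he
  have hden : ∀ k, 0 < γ * lam k + 1 := by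
    intro k
    have := (hlam k).le
    positivity
  have hdpos : ∀ k, 0 < d k := fun k => div_pos (by nlinarith [hlam k]) (hden k)
  have hepos : ∀ k, 0 < e k := fun k => div_pos (by nlinarith [hlam k]) (hden k)
  have c1 : ∀ k : Fin n, ((d k : ℝ) : ℂ) =
      ((α : ℂ) * (lam k : ℂ) + (ρ : ℂ)) / ((γ : ℂ) * (lam k : ℂ) + 1) := by
    intro k
    rw [hd]
    push_cast
    ring
  have c2 : ∀ k : Fin n, ((e k : ℝ) : ℂ) =
      (β : ℂ) * (lam k : ℂ) / ((γ : ℂ) * (lam k : ℂ) + 1) := by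
    intro k
    rw [he]
    push_cast
    ring
  -- the key spectral characterization
  have key : ∀ η : ℂ, η ∈ spectrum ℂ (A.map (Complex.ofReal)) ↔
      ∃ k : Fin n, η ^ 2 + η * (d k : ℂ) + (e k : ℂ) = 0 := by
    intro η
    rw [spectrum.mem_iff, Matrix.isUnit_iff_isUnit_det, isUnit_iff_ne_zero, not_not]
    have halg : (algebraMap ℂ (Matrix (Fin n ⊕ Fin n) (Fin n ⊕ Fin n) ℂ)) η = η • 1 := by
      rw [Algebra.algebraMap_eq_smul_one]
    rw [halg]
    -- identify the matrix with a block-diagonal one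
    have hA : η • (1 : Matrix (Fin n ⊕ Fin n) (Fin n ⊕ Fin n) ℂ) - A.map (Complex.ofReal) =
        (Matrix.blockDiagonal fun k : Fin n =>
          Matrix.of (fun i j : Bool =>
            if i then (if j then η else (e k : ℂ))
            else (if j then (-1 : ℂ) else η + (d k : ℂ)))).submatrix
          (Equiv.boolProdEquivSum (Fin n)).symm (Equiv.boolProdEquivSum (Fin n)).symm := by
      ext i j
      rcases i with k | k <;> rcases j with l | l <;> rcases eq_or_ne k l with hkl | hkl <;>
        simp [A, Γ, S, Matrix.blockDiagonal_apply, Matrix.one_apply, Matrix.diagonal_apply,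
          Matrix.fromBlocks, hkl, d, e] <;>
        ring
    rw [hA, Matrix.det_submatrix_equiv_self, Matrix.det_blockDiagonal]
    rw [Finset.prod_eq_zero_iff]
    have hdet : ∀ k : Fin n, (Matrix.of (fun i j : Bool =>
        if i then (if j then η else (e k : ℂ))
        else (if j then (-1 : ℂ) else η + (d k : ℂ)))).det
        = η ^ 2 + η * (d k : ℂ) + (e k : ℂ) := by
      intro k
      rw [← Matrix.det_submatrix_equiv_self finTwoEquiv, Matrix.det_fin_two]
      simp [finTwoEquiv]
      ring
    constructor
    · rintro ⟨k, -, hk⟩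
      exact ⟨k, by rw [← hdet k]; exact hk⟩
    · rintro ⟨k, hk⟩
      exact ⟨k, Finset.mem_univ k, by rw [hdet k]; exact hk⟩
  constructor
  · intro η hη
    obtain ⟨k, hk⟩ := (key η).mp hη
    exact quad_root_re_neg (d k) (e k) (hdpos k) (hepos k) η hk
  · ext η
    rw [key η]
    simp only [Set.mem_setOf_eq]
    exact exists_congr fun k => by rw [c1 k, c2 k]
end
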